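/- Let G be a finitely generated group and H a finite-index normal subgroup. If there exists a nonempty minimal strongly aperiodic subshift of finite type over H, then there exists a nonempty minimal strongly aperiodic subshift of finite type over G. -/

import Mathlib

section SymbolicDynamics

variable {G A : Type*} [Group G]

/-- The shift action: `σ^g(x)(h) = x(g⁻¹h)`. -/
def shiftAct (g : G) (x : G → A) : G → A := fun h => x (g⁻¹ * h)

/-- A pattern with finite support `P` appears in `x` if some translate of `x` matches it. -/
def Appears (P : Finset G) (p : G → A) (x : G → A) : Prop :=
  ∃ g : G, ∀ h ∈ P, x (g * h) = p h

/-- A subshift of finite type: the configurations avoiding a finite set of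
forbidden patterns. -/
def IsSFT (X : Set (G → A)) : Prop :=
  ∃ F : Finset (Finset G × (G → A)),
    X = { x | ∀ f ∈ F, ¬ Appears f.1 f.2 x }

/-- Every configuration has trivial stabilizer. -/
def StronglyAperiodic (X : Set (G → A)) : Prop :=
  ∀ x ∈ X, ∀ g : G, shiftAct g x = x → g = 1

/-- Closedness in the prodiscrete topology on `A^G`, stated combinatorially:
any configuration all of whose finite restrictions are matched by elements of `Y`
belongs to `Y`. -/
def IsClosedConfigSet (Y : Set (G → A)) : Prop :=
  ∀ x : G → A, (∀ S : Finset G, ∃ y ∈ Y, ∀ h ∈ S, y h = x h) → x ∈ Y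

/-- Minimality: `X` has no nonempty proper closed shift-invariant subset. -/
def MinimalSubshift (X : Set (G → A)) : Prop :=
  ∀ Y : Set (G → A), Y ⊆ X → IsClosedConfigSet Y →
    (∀ (g : G), ∀ y ∈ Y, shiftAct g y ∈ Y) → Y.Nonempty → Y = X

end SymbolicDynamics

/-! Choose a section `s` of `G → G ⧸ H` with `s H = 1`; then `ρ_q(g) = s(q)⁻¹ g s(g⁻¹ q)` is an
`H`-valued cocycle. A configuration `x` over `H` and a phase `q ∈ G ⧸ H` induce the configuration
`g ↦ (x (ρ_q g), g⁻¹ q)` over `G`, and the cocycle identity turns a shift by `g` into a change of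
phase together with a shift of `x` by `ρ_{gq}(g)`. Hence the induced subshift is strongly aperiodic
and minimal as soon as `X` is. It is of finite type because, `G` being finitely generated and
`G ⧸ H` finite, it is cut out by a local rule on a finite window: the coset layer moves along the
generators, every symbol is copied from a site of its coset lying over `H`, and the forbidden
patterns of `X` are avoided around sites lying over `H`. Finally the alphabet `A × G ⧸ H` is
renamed to `A × Fin [G : H]`, which preserves all four properties. -/

section Subshift

variable {G A : Type*} [Group G]

@[simp] lemma shiftAct_apply (g : G) (x : G → A) (h : G) : shiftAct g x h = x (g⁻¹ * h) := rfl

lemma appears_shiftAct_iff {P : Finset G} {p : G → A} {g : G} {x : G → A} :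
    Appears P p (shiftAct g x) ↔ Appears P p x := by
  constructor
  · rintro ⟨k, hk⟩
    exact ⟨g⁻¹ * k, fun h hh => by simpa [mul_assoc] using hk h hh⟩
  · rintro ⟨k, hk⟩
    exact ⟨g * k, fun h hh => by simpa [mul_assoc] using hk h hh⟩

lemma IsSFT.shiftAct_mem {X : Set (G → A)} (hX : IsSFT X) (g : G) (x : G → A) (hx : x ∈ X) :
    shiftAct g x ∈ X := by
  obtain ⟨F, rfl⟩ := hX
  exact fun f hf => appears_shiftAct_iff.not.mpr (hx f hf)

lemma IsSFT.isClosedConfigSet {X : Set (G → A)} (hX : IsSFT X) : IsClosedConfigSet X := by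
  classical
  obtain ⟨F, rfl⟩ := hX
  rintro x hx f hf ⟨g, hg⟩
  obtain ⟨y, hyX, hy⟩ := hx (f.1.image (g * ·))
  exact hyX f hf ⟨g, fun h hh => (hy _ (Finset.mem_image_of_mem _ hh)).trans (hg h hh)⟩

lemma isSFT_of_local_rule [Finite A] (W : Finset G) (rule : (G → A) → Prop)
    (hrule : ∀ p p' : G → A, (∀ w ∈ W, p w = p' w) → rule p → rule p') :
    IsSFT {y : G → A | ∀ g, rule (fun w => y (g * w))} := by
  let restrict : {p : G → A // ¬ rule p} → (W → A) := fun p w => p.1 w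
  -- Forbid one representative of each restriction to `W` of a pattern violating the rule.
  refine ⟨(Set.finite_range fun b => (W, (Set.rangeSplitting restrict b).1)).toFinset, ?_⟩
  ext y
  simp only [Set.Finite.mem_toFinset, Set.mem_range, Set.mem_ofPred_eq, forall_exists_index,
    forall_apply_eq_imp_iff]
  constructor
  · rintro hy b ⟨g, hg⟩
    exact (Set.rangeSplitting restrict b).2 (hrule _ _ hg (hy g))
  · intro hy g
    by_contra hbad
    let b : Set.range restrict := ⟨_, ⟨fun w => y (g * w), hbad⟩, rfl⟩
    exact hy b ⟨g, fun w hw => (congrFun (Set.apply_rangeSplitting restrict b) ⟨w, hw⟩).symm⟩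

lemma MinimalSubshift.exists_shiftAct_eqOn {X : Set (G → A)} (hmin : MinimalSubshift X)
    (hclosed : IsClosedConfigSet X) (hinv : ∀ g, ∀ x ∈ X, shiftAct g x ∈ X)
    {x₀ x : G → A} (hx₀ : x₀ ∈ X) (hx : x ∈ X) (T : Finset G) :
    ∃ k : G, ∀ h ∈ T, shiftAct k x₀ h = x h := by
  classical
  let orbitClosure : Set (G → A) :=
    {z | ∀ S : Finset G, ∃ k : G, ∀ h ∈ S, shiftAct k x₀ h = z h}
  have hsub : orbitClosure ⊆ X := fun z hz => hclosed z fun S => by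
    obtain ⟨k, hk⟩ := hz S
    exact ⟨_, hinv k x₀ hx₀, hk⟩
  have hclosed' : IsClosedConfigSet orbitClosure := fun z hz S => by
    obtain ⟨z', hz', hagree⟩ := hz S
    obtain ⟨k, hk⟩ := hz' S
    exact ⟨k, fun h hh => (hk h hh).trans (hagree h hh)⟩
  have hinv' : ∀ g, ∀ z ∈ orbitClosure, shiftAct g z ∈ orbitClosure := fun g z hz S => by
    obtain ⟨k, hk⟩ := hz (S.image (g⁻¹ * ·))
    exact ⟨g * k, fun h hh => by simpa [mul_assoc] using hk _ (Finset.mem_image_of_mem _ hh)⟩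
  have hne : orbitClosure.Nonempty := ⟨x₀, fun _ => ⟨1, by simp⟩⟩
  rw [← hmin _ hsub hclosed' hinv' hne] at hx
  exact hx T

end Subshift

section Recoding

variable {G A B : Type*} (e : A ≃ B)

lemma mem_image_comp_equiv_iff {X : Set (G → A)} {y : G → B} :
    y ∈ (e ∘ ·) '' X ↔ e.symm ∘ y ∈ X := by
  constructor
  · rintro ⟨x, hx, rfl⟩
    simpa [Function.comp_def] using hx
  · exact fun hy => ⟨_, hy, by simp [Function.comp_def]⟩

lemma IsClosedConfigSet.image_comp_equiv {Y : Set (G → A)} (hY : IsClosedConfigSet Y) :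
    IsClosedConfigSet ((e ∘ ·) '' Y) := by
  refine fun x hx => (mem_image_comp_equiv_iff e).mpr (hY _ fun S => ?_)
  obtain ⟨_, ⟨y, hy, rfl⟩, hagree⟩ := hx S
  exact ⟨y, hy, fun h hh => by simp [← hagree h hh]⟩

variable [Group G]

lemma appears_comp_equiv_iff {P : Finset G} {p : G → A} {y : G → B} :
    Appears P (e ∘ p) y ↔ Appears P p (e.symm ∘ y) := by
  simp only [Appears, Function.comp_apply, Equiv.symm_apply_eq]

lemma IsSFT.image_comp_equiv {X : Set (G → A)} (hX : IsSFT X) : IsSFT ((e ∘ ·) '' X) := by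
  classical
  obtain ⟨F, rfl⟩ := hX
  refine ⟨F.image fun f => (f.1, e ∘ f.2), Set.ext fun y => ?_⟩
  rw [mem_image_comp_equiv_iff]
  simp only [Set.mem_ofPred_eq, Finset.forall_mem_image, appears_comp_equiv_iff]

lemma StronglyAperiodic.image_comp_equiv {X : Set (G → A)} (hX : StronglyAperiodic X) :
    StronglyAperiodic ((e ∘ ·) '' X) := by
  rintro _ ⟨x, hx, rfl⟩ g hg
  exact hX x hx g (funext fun h => e.injective (congrFun hg h))

lemma MinimalSubshift.image_comp_equiv {X : Set (G → A)} (hX : MinimalSubshift X) :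
    MinimalSubshift ((e ∘ ·) '' X) := by
  intro Y hYX hclosed hinv hne
  have hpull : (e.symm ∘ ·) '' Y = X := by
    refine hX _ ?_ (hclosed.image_comp_equiv e.symm) ?_ (hne.image _)
    · rintro _ ⟨y, hy, rfl⟩
      exact (mem_image_comp_equiv_iff e).mp (hYX hy)
    · rintro g _ ⟨y, hy, rfl⟩
      exact ⟨_, hinv g y hy, rfl⟩
  rw [← hpull, Set.image_image]
  simp [Function.comp_def]

end Recoding

section CosetCocycle

variable {G : Type*} [Group G] {H : Subgroup G}

lemma smul_mk_one_of_mem {h : G} (hh : h ∈ H) : h • ((1 : G) : G ⧸ H) = ((1 : G) : G ⧸ H) := by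
  rw [MulAction.Quotient.smul_mk, smul_eq_mul, mul_one, QuotientGroup.eq]
  simpa using hh

open Classical in
/-- Normalised at the base coset so that `cosetCocycle ((1 : G) : G ⧸ H)` is the identity
of `H`. -/
noncomputable def cosetRep (q : G ⧸ H) : G := if q = ((1 : G) : G ⧸ H) then 1 else q.out

@[simp] lemma mk_cosetRep (q : G ⧸ H) : ((cosetRep q : G) : G ⧸ H) = q := by
  unfold cosetRep
  split_ifs with hq
  · exact hq.symm
  · exact QuotientGroup.out_eq' q

@[simp] lemma cosetRep_mk_one : cosetRep ((1 : G) : G ⧸ H) = 1 := if_pos rfl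

lemma cosetRep_smul_mk_one (q : G ⧸ H) : cosetRep q • ((1 : G) : G ⧸ H) = q := by
  rw [MulAction.Quotient.smul_mk, smul_eq_mul, mul_one, mk_cosetRep]

lemma cosetRep_inv_smul (q : G ⧸ H) : (cosetRep q)⁻¹ • q = ((1 : G) : G ⧸ H) :=
  inv_smul_eq_iff.mpr (cosetRep_smul_mk_one q).symm

noncomputable def cosetCocycle (q : G ⧸ H) (g : G) : H :=
  ⟨(cosetRep q)⁻¹ * (g * cosetRep (g⁻¹ • q)), QuotientGroup.eq.mp (by
    rw [← smul_eq_mul, ← MulAction.Quotient.smul_mk, mk_cosetRep, mk_cosetRep, smul_inv_smul])⟩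

lemma coe_cosetCocycle (q : G ⧸ H) (g : G) :
    (cosetCocycle q g : G) = (cosetRep q)⁻¹ * (g * cosetRep (g⁻¹ • q)) := rfl

lemma mul_cosetRep_inv_smul (q : G ⧸ H) (g : G) :
    g * cosetRep (g⁻¹ • q) = cosetRep q * cosetCocycle q g := by
  rw [coe_cosetCocycle, mul_inv_cancel_left]

lemma cosetCocycle_mul (q : G ⧸ H) (g g' : G) :
    cosetCocycle q (g * g') = cosetCocycle q g * cosetCocycle (g⁻¹ • q) g' := by
  ext
  simp only [coe_cosetCocycle, Subgroup.coe_mul, mul_inv_rev, mul_smul]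
  group

@[simp] lemma cosetCocycle_cosetRep (q : G ⧸ H) : cosetCocycle q (cosetRep q) = 1 := by
  ext
  simp [coe_cosetCocycle, cosetRep_inv_smul]

@[simp] lemma cosetCocycle_mk_one (h : H) : cosetCocycle ((1 : G) : G ⧸ H) h = h := by
  ext
  simp [coe_cosetCocycle, smul_mk_one_of_mem (H.inv_mem h.2)]

lemma eq_one_of_cosetCocycle_eq_one {q : G ⧸ H} {g : G} (hq : g • q = q)
    (h1 : cosetCocycle q g = 1) : g = 1 := by
  have hq' : g⁻¹ • q = q := inv_smul_eq_iff.mpr hq.symm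
  have := congrArg Subtype.val h1
  rw [coe_cosetCocycle, hq', OneMemClass.coe_one, inv_mul_eq_one] at this
  simpa using this

lemma exists_smul_eq_and_cosetCocycle_eq (q₀ q : G ⧸ H) (k : H) :
    ∃ g : G, g • q₀ = q ∧ cosetCocycle q g = k := by
  have hq : (cosetRep q * k * (cosetRep q₀)⁻¹) • q₀ = q := by
    rw [mul_smul, mul_smul, cosetRep_inv_smul, smul_mk_one_of_mem k.2, cosetRep_smul_mk_one]
  refine ⟨_, hq, Subtype.ext ?_⟩
  rw [coe_cosetCocycle, inv_smul_eq_iff.mpr hq.symm]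
  group

end CosetCocycle

lemma apply_eq_inv_smul_apply_one_of_closure_eq_top {G Q : Type*} [Group G] [MulAction G Q]
    {S : Set G} (hS : Subgroup.closure S = ⊤) {c : G → Q}
    (hc : ∀ g, ∀ σ ∈ S, c (g * σ) = σ⁻¹ • c g) (g : G) : c g = g⁻¹ • c 1 := by
  suffices h : ∀ t g, c (g * t) = t⁻¹ • c g by simpa using h g 1
  intro t
  induction (hS ▸ Subgroup.mem_top t : t ∈ Subgroup.closure S) using Subgroup.closure_induction
    with
  | mem σ hσ => exact fun g => hc g σ hσ
  | one => simp
  | mul a b _ _ ha hb => intro g; rw [← mul_assoc, hb, ha, mul_inv_rev, mul_smul]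
  | inv a _ ha =>
    intro g
    have h := ha (g * a⁻¹)
    rw [inv_mul_cancel_right] at h
    rw [inv_inv, h, smul_inv_smul]

section Induction

variable {G A : Type*} [Group G] {H : Subgroup G}

noncomputable def inducedConfig (q : G ⧸ H) (x : H → A) : G → A × G ⧸ H :=
  fun g => (x (cosetCocycle q g), g⁻¹ • q)

lemma shiftAct_inducedConfig (g₀ : G) (q : G ⧸ H) (x : H → A) :
    shiftAct g₀ (inducedConfig q x)
      = inducedConfig (g₀ • q) (shiftAct (cosetCocycle (g₀ • q) g₀) x) := by
  funext g
  have hcoc := cosetCocycle_mul (g₀ • q) g₀ (g₀⁻¹ * g)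
  rw [mul_inv_cancel_left, inv_smul_smul] at hcoc
  simp [inducedConfig, hcoc, mul_smul]

lemma cosetCocycle_cosetRep_mul (q : G ⧸ H) (h : H) : cosetCocycle q (cosetRep q * h) = h := by
  rw [cosetCocycle_mul, cosetCocycle_cosetRep, cosetRep_inv_smul, cosetCocycle_mk_one, one_mul]

lemma inducedConfig_inj {q q' : G ⧸ H} {x x' : H → A}
    (h : inducedConfig q x = inducedConfig q' x') : q = q' ∧ x = x' := by
  have hq : q = q' := by simpa [inducedConfig] using congrArg Prod.snd (congrFun h 1)
  subst hq
  refine ⟨rfl, funext fun k => ?_⟩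
  simpa [inducedConfig, cosetCocycle_cosetRep_mul] using
    congrArg Prod.fst (congrFun h (cosetRep q * k))

def inducedShift (X : Set (H → A)) : Set (G → A × G ⧸ H) :=
  {y | ∃ q, ∃ x ∈ X, inducedConfig q x = y}

lemma Set.Nonempty.inducedShift {X : Set (H → A)} (hX : X.Nonempty) :
    (inducedShift X : Set (G → A × G ⧸ H)).Nonempty :=
  ⟨_, (1 : G), hX.some, hX.some_mem, rfl⟩

lemma StronglyAperiodic.inducedShift {X : Set (H → A)} (hX : StronglyAperiodic X) :
    StronglyAperiodic (inducedShift X : Set (G → A × G ⧸ H)) := by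
  rintro _ ⟨q, x, hx, rfl⟩ g hg
  rw [shiftAct_inducedConfig] at hg
  obtain ⟨hq, hx'⟩ := inducedConfig_inj hg
  rw [hq] at hx'
  exact eq_one_of_cosetCocycle_eq_one hq (hX x hx _ hx')

lemma MinimalSubshift.inducedShift {X : Set (H → A)} (hmin : MinimalSubshift X)
    (hclosed : IsClosedConfigSet X) (hinv : ∀ g, ∀ x ∈ X, shiftAct g x ∈ X) :
    MinimalSubshift (inducedShift X : Set (G → A × G ⧸ H)) := by
  classical
  rintro Y hYX hYclosed hYinv ⟨_, hy₀⟩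
  obtain ⟨q₀, x₀, hx₀, rfl⟩ := hYX hy₀
  refine Set.Subset.antisymm hYX ?_
  rintro _ ⟨q, x, hx, rfl⟩
  refine hYclosed _ fun T => ?_
  obtain ⟨k, hk⟩ := hmin.exists_shiftAct_eqOn hclosed hinv hx₀ hx (T.image (cosetCocycle q))
  obtain ⟨g, hg, rfl⟩ := exists_smul_eq_and_cosetCocycle_eq q₀ q k
  refine ⟨_, hYinv g _ hy₀, fun h hh => ?_⟩
  rw [shiftAct_inducedConfig, hg]
  exact Prod.ext (hk _ (Finset.mem_image_of_mem _ hh)) rfl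

end Induction

section InducedRule

variable {G A : Type*} [Group G] {H : Subgroup G}

/-- The coset layer moves along the generators in `S`, each symbol is copied from the site of its
coset lying over `H`, and no pattern of `F` sits at a site lying over `H`. -/
def InducedRule (S : Finset G) (F : Finset (Finset H × (H → A))) (p : G → A × G ⧸ H) : Prop :=
  (∀ σ ∈ S, (p σ).2 = σ⁻¹ • (p 1).2) ∧ (p (cosetRep (p 1).2)).1 = (p 1).1 ∧
    ((p 1).2 = ((1 : G) : G ⧸ H) → ∀ f ∈ F, ¬ ∀ h ∈ f.1, (p h).1 = f.2 h)

lemma exists_window_inducedRule [Finite (G ⧸ H)] (S : Finset G)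
    (F : Finset (Finset H × (H → A))) :
    ∃ W : Finset G, ∀ p p' : G → A × G ⧸ H, (∀ w ∈ W, p w = p' w) →
      InducedRule S F p → InducedRule S F p' := by
  classical
  refine ⟨insert 1 (S ∪ (Set.finite_range (cosetRep (H := H))).toFinset ∪
    F.biUnion fun f => f.1.map (Function.Embedding.subtype _)), ?_⟩
  rintro p p' hpp' ⟨hphase, hcopy, hbase⟩
  have h1 : p 1 = p' 1 := hpp' 1 (by simp)
  refine ⟨fun σ hσ => ?_, ?_, fun hq f hf hmatch => ?_⟩
  · rw [← h1, ← hpp' σ (by simp [hσ]), hphase σ hσ]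
  · rw [← h1, ← hpp' _ (by simp)]
    exact hcopy
  · refine hbase (h1 ▸ hq) f hf fun h hh => ?_
    rw [hpp' h (Finset.mem_insert_of_mem (Finset.mem_union_right _
      (Finset.mem_biUnion.mpr ⟨f, hf, Finset.mem_map_of_mem _ hh⟩)))]
    exact hmatch h hh

lemma inducedRule_inducedConfig (S : Finset G) {F : Finset (Finset H × (H → A))} {x : H → A}
    (hx : ∀ f ∈ F, ¬ Appears f.1 f.2 x) (q : G ⧸ H) (g : G) :
    InducedRule S F (fun w => inducedConfig q x (g * w)) := by
  simp only [InducedRule, inducedConfig, mul_one]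
  refine ⟨fun σ _ => by rw [mul_inv_rev, mul_smul], ?_, fun hq f hf hmatch => ?_⟩
  · rw [cosetCocycle_mul, cosetCocycle_cosetRep, mul_one]
  · refine hx f hf ⟨cosetCocycle q g, fun h hh => ?_⟩
    rw [← hmatch h hh, cosetCocycle_mul, hq, cosetCocycle_mk_one]

lemma exists_inducedConfig_eq_of_inducedRule {S : Finset G}
    (hS : Subgroup.closure (S : Set G) = ⊤) {F : Finset (Finset H × (H → A))} {y : G → A × G ⧸ H}
    (hy : ∀ g, InducedRule S F (fun w => y (g * w))) :
    ∃ q x, (∀ f ∈ F, ¬ Appears f.1 f.2 x) ∧ inducedConfig q x = y := by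
  have hphase : ∀ g, (y g).2 = g⁻¹ • (y 1).2 :=
    apply_eq_inv_smul_apply_one_of_closure_eq_top hS (c := fun g => (y g).2)
      fun g σ hσ => by simpa using (hy g).1 σ hσ
  set q := (y 1).2
  let x : H → A := fun h => (y (cosetRep q * h)).1
  have hy_eq : inducedConfig q x = y := by
    funext g
    refine Prod.ext ?_ (hphase g).symm
    have hcopy := (hy g).2.1
    simp only [mul_one, hphase g, mul_cosetRep_inv_smul] at hcopy
    exact hcopy
  refine ⟨q, x, fun f hf ⟨k, hk⟩ => ?_, hy_eq⟩
  have hbase : (y (cosetRep q * k)).2 = ((1 : G) : G ⧸ H) := by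
    rw [hphase, mul_inv_rev, mul_smul, cosetRep_inv_smul, smul_mk_one_of_mem (H.inv_mem k.2)]
  refine (hy (cosetRep q * k)).2.2 (by simpa using hbase) f hf fun h hh => ?_
  simp only [← hk h hh, x, Subgroup.coe_mul, mul_assoc]

end InducedRule

lemma IsSFT.inducedShift {G A : Type*} [Group G] {H : Subgroup G} [Finite A] [Finite (G ⧸ H)]
    (hG : Group.FG G) {X : Set (H → A)} (hX : IsSFT X) :
    IsSFT (inducedShift X : Set (G → A × G ⧸ H)) := by
  obtain ⟨S, hS⟩ := hG.out
  obtain ⟨F, rfl⟩ := hX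
  obtain ⟨W, hW⟩ := exists_window_inducedRule S F
  convert isSFT_of_local_rule W (InducedRule S F) hW using 1
  ext y
  constructor
  · rintro ⟨q, x, hx, rfl⟩ g
    exact inducedRule_inducedConfig S hx q g
  · intro hy
    obtain ⟨q, x, hx, rfl⟩ := exists_inducedConfig_eq_of_inducedRule hS hy
    exact ⟨q, x, hx, rfl⟩

theorem lift_minimal_strongly_aperiodic_SFT_general
    (G : Type*) [Group G] (hfg : Group.FG G)
    (H : Subgroup G) [H.FiniteIndex]
    (hH : ∃ (A : Type) (_ : Finite A) (X : Set (↥H → A)),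
      IsSFT X ∧ X.Nonempty ∧ StronglyAperiodic X ∧ MinimalSubshift X) :
    ∃ (A : Type) (_ : Finite A) (X : Set (G → A)),
      IsSFT X ∧ X.Nonempty ∧ StronglyAperiodic X ∧ MinimalSubshift X := by
  obtain ⟨A, _, X, hsft, hne, hap, hmin⟩ := hH
  obtain ⟨n, ⟨e⟩⟩ := Finite.exists_equiv_fin (G ⧸ H)
  let E : A × G ⧸ H ≃ A × Fin n := (Equiv.refl A).prodCongr e
  exact ⟨A × Fin n, inferInstance, (E ∘ ·) '' inducedShift X,
    (hsft.inducedShift hfg).image_comp_equiv E, hne.inducedShift.image _,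
    hap.inducedShift.image_comp_equiv E,
    (hmin.inducedShift hsft.isClosedConfigSet hsft.shiftAct_mem).image_comp_equiv E⟩

theorem lift_minimal_strongly_aperiodic_SFT
    (G : Type*) [Group G] (hfg : Group.FG G)
    (H : Subgroup G) [H.Normal] [H.FiniteIndex]
    (hH : ∃ (A : Type) (_ : Finite A) (X : Set (↥H → A)),
      IsSFT X ∧ X.Nonempty ∧ StronglyAperiodic X ∧ MinimalSubshift X) :
    ∃ (A : Type) (_ : Finite A) (X : Set (G → A)),
      IsSFT X ∧ X.Nonempty ∧ StronglyAperiodic X ∧ MinimalSubshift X :=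
  lift_minimal_strongly_aperiodic_SFT_general G hfg H hH
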